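/- arXiv:1205.1197 — 8 statements merged into one kernel-verified Lean document; each statement's English description precedes it below -/
import Mathlib

section
/- For an admissible pair (a,p), the coding map π_a is a right inverse of the upper itinerary map of the uniform Lorenz system: π_a(μ^+_{a,p}(x)) = x for all x ∈ [0,1]. -/
open scoped Classical

/-- `(a,p)` is admissible if `a ∈ (1,2)`, `p ∈ (0,1)` and `1 - 1/a ≤ p ≤ 1/a`. -/
def Admissible (a p : ℝ) : Prop :=
  1 < a ∧ a < 2 ∧ 0 < p ∧ p < 1 ∧ 1 - 1 / a ≤ p ∧ p ≤ 1 / a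

/-- The uniform upper Lorenz map `U⁺_{a,p}`. -/
noncomputable def Uplus (a p : ℝ) (x : ℝ) : ℝ :=
  if x < p then a * x else a * x + 1 - a

/-- The upper itinerary of `x` under `U⁺_{a,p}`: the `k`-th entry is `1` iff
`(U⁺_{a,p})^k(x) ≥ p`. -/
noncomputable def muPlus (a p : ℝ) (x : ℝ) : ℕ → Bool :=
  fun k => decide (p ≤ (Uplus a p)^[k] x)

/-- The coding map `π_a(ω) = (1 - 1/a) ∑_{k≥0} ω_k a^{-k}`. -/
noncomputable def codingMap (a : ℝ) (ω : ℕ → Bool) : ℝ :=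
  (1 - 1 / a) * ∑' k : ℕ, (if ω k then (1 : ℝ) else 0) / a ^ k

/-!
Every `y` satisfies `y = (1 - 1/a) ω₀(y) + U⁺(y)/a`, where `ω₀(y) ∈ {0,1}` is the first
itinerary digit. Iterating this identity `n` times expresses `x` as the `n`-th partial sum of
`π_a(μ⁺(x))` plus the remainder `(U⁺)ⁿ(x)/aⁿ`. Admissibility makes `[0,1]` invariant under `U⁺`,
so the remainder is bounded by `a⁻ⁿ` and tends to `0`.
-/

open Filter Topology Finset

theorem sum_range_mul_digit_div_pow_eq {f d : ℝ → ℝ} {a c : ℝ}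
    (hf : ∀ y, y = c * d y + f y / a) (x : ℝ) (n : ℕ) :
    ∑ k ∈ range n, c * (d (f^[k] x) / a ^ k) = x - f^[n] x / a ^ n := by
  induction n with
  | zero => simp
  | succ n ih =>
    have hstep := hf (f^[n] x)
    rw [sum_range_succ, ih, Function.iterate_succ_apply', pow_succ]
    linear_combination (-1 / a ^ n) * hstep

theorem tendsto_div_pow_of_mem_Icc {u : ℕ → ℝ} {a : ℝ} (ha : 1 < a)
    (hu : ∀ n, u n ∈ Set.Icc (0 : ℝ) 1) :
    Tendsto (fun n => u n / a ^ n) atTop (𝓝 0) := by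
  have ha0 : 0 < a := zero_lt_one.trans ha
  refine squeeze_zero (fun n => div_nonneg (hu n).1 (pow_nonneg ha0.le n))
    (fun n => ?_)
    (tendsto_pow_atTop_nhds_zero_of_lt_one (inv_nonneg.2 ha0.le) (inv_lt_one_of_one_lt₀ ha))
  rw [inv_pow, div_eq_mul_inv]
  exact mul_le_of_le_one_left (inv_nonneg.2 (pow_nonneg ha0.le n)) (hu n).2

theorem hasSum_mul_digit_div_pow {f d : ℝ → ℝ} {a c : ℝ} (ha : 1 < a)
    (hf : ∀ y, y = c * d y + f y / a) (hd : ∀ y, 0 ≤ c * d y) {x : ℝ}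
    (hx : ∀ n, f^[n] x ∈ Set.Icc (0 : ℝ) 1) :
    HasSum (fun k => c * (d (f^[k] x) / a ^ k)) x := by
  have ha0 : 0 < a := zero_lt_one.trans ha
  refine (hasSum_iff_tendsto_nat_of_nonneg (fun k => ?_) x).2 ?_
  · rw [← mul_div_assoc]
    exact div_nonneg (hd _) (pow_nonneg ha0.le k)
  · simp_rw [sum_range_mul_digit_div_pow_eq hf x]
    simpa using (tendsto_div_pow_of_mem_Icc ha hx).const_sub x

theorem Uplus_expansion {a : ℝ} (ha : a ≠ 0) (p y : ℝ) :
    y = (1 - 1 / a) * (if p ≤ y then 1 else 0) + Uplus a p y / a := by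
  rcases lt_or_ge y p with hyp | hyp
  · rw [Uplus, if_pos hyp, if_neg hyp.not_ge]
    field_simp
    ring
  · rw [Uplus, if_neg hyp.not_gt, if_pos hyp]
    field_simp
    ring

theorem Admissible.mapsTo_Uplus {a p : ℝ} (h : Admissible a p) :
    Set.MapsTo (Uplus a p) (Set.Icc 0 1) (Set.Icc 0 1) := by
  obtain ⟨ha1, -, -, -, hpl, hpu⟩ := h
  have ha0 : 0 < a := zero_lt_one.trans ha1
  have hap : a * p ≤ 1 := by rwa [le_div_iff₀' ha0] at hpu
  have hap' : a - 1 ≤ a * p :=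
    calc a - 1 = a * (1 - 1 / a) := by field_simp
      _ ≤ a * p := mul_le_mul_of_nonneg_left hpl ha0.le
  intro y ⟨hy0, hy1⟩
  unfold Uplus
  split_ifs with hyp
  · exact ⟨by positivity, by nlinarith⟩
  · exact ⟨by nlinarith, by nlinarith⟩

theorem codingMap_muPlus (a p : ℝ) (h : Admissible a p) :
    ∀ x ∈ Set.Icc (0 : ℝ) 1, codingMap a (muPlus a p x) = x := by
  intro x hx
  have ha : 1 < a := h.1
  have hscale : 0 ≤ 1 - 1 / a := by
    rw [sub_nonneg, div_le_one₀ (zero_lt_one.trans ha)]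
    exact ha.le
  have hdigit : ∀ y, 0 ≤ (1 - 1 / a) * (if p ≤ y then 1 else 0) := fun y =>
    mul_nonneg hscale (by split_ifs <;> norm_num)
  have horbit : ∀ n, (Uplus a p)^[n] x ∈ Set.Icc (0 : ℝ) 1 := fun n =>
    (h.mapsTo_Uplus.iterate n) hx
  have hsum := hasSum_mul_digit_div_pow ha (Uplus_expansion (zero_lt_one.trans ha).ne' p)
    hdigit horbit
  simp only [codingMap, muPlus, decide_eq_true_eq, ← tsum_mul_left]
  exact hsum.tsum_eq
end

section
/- For an admissible pair (a,p), the coding map π_a is a right inverse of the lower itinerary map: π_a(μ^-_{a,p}(x)) = x for all x ∈ [0,1]. -/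
open scoped Classical

/-- The uniform lower Lorenz map `U⁻_{a,p}`. -/
noncomputable def Uminus (a p : ℝ) (x : ℝ) : ℝ :=
  if x ≤ p then a * x else a * x + 1 - a

/-- The lower itinerary of `x` under `U⁻_{a,p}`: the `k`-th entry is `1` iff
`(U⁻_{a,p})^k(x) > p`. -/
noncomputable def muMinus (a p : ℝ) (x : ℝ) : ℕ → Bool :=
  fun k => decide (p < (Uminus a p)^[k] x)

/-!
Each step of `U⁻_{a,p}` satisfies `x = (1 - 1/a) ε(x) + U⁻(x) / a`, where `ε(x) ∈ {0, 1}` is the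
current digit. Hence the `k`-th term of the series `π_a(μ⁻(x))` is the telescoping difference
`Uᵏ(x) / aᵏ - Uᵏ⁺¹(x) / aᵏ⁺¹`, and admissibility makes `U⁻` map `[0,1]` into itself, so the
orbit is bounded and the series sums to `U⁰(x) = x`.
-/

theorem Summable.hasSum_sub_succ {g : ℕ → ℝ} (hg : Summable g) :
    HasSum (fun k => g k - g (k + 1)) (g 0) := by
  simpa using hg.hasSum.sub ((hasSum_nat_add_iff' 1).mpr hg.hasSum)

theorem summable_div_pow_of_abs_le {u : ℕ → ℝ} {a C : ℝ} (ha : 1 < |a|)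
    (hu : ∀ n, |u n| ≤ C) : Summable fun n => u n / a ^ n := by
  have ha0 : 0 < |a| := by linarith
  refine Summable.of_norm_bounded
    ((summable_geometric_of_lt_one (by positivity) ((inv_lt_one₀ ha0).2 ha)).mul_left C) ?_
  intro n
  rw [Real.norm_eq_abs, abs_div, abs_pow, div_eq_mul_inv, inv_pow]
  gcongr
  exact hu n

theorem hasSum_digit_div_pow_of_eq_digit_add_div {T d : ℝ → ℝ} {a C x : ℝ} (ha : 1 < |a|)
    (hT : ∀ y, y = d y + T y / a) (hC : ∀ n, |T^[n] x| ≤ C) :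
    HasSum (fun k => d (T^[k] x) / a ^ k) x := by
  have ha0 : a ≠ 0 := by rintro rfl; norm_num at ha
  have htel := (summable_div_pow_of_abs_le ha hC).hasSum_sub_succ
  convert htel using 1
  · funext k
    have hk := hT (T^[k] x)
    rw [Function.iterate_succ_apply', pow_succ]
    field_simp at hk ⊢
    linarith
  · simp

theorem Uminus_eq_digit_add_div {a : ℝ} (ha : a ≠ 0) (p x : ℝ) :
    x = (1 - 1 / a) * (if p < x then 1 else 0) + Uminus a p x / a := by
  rcases le_or_gt x p with hxp | hxp
  · rw [Uminus, if_pos hxp, if_neg hxp.not_gt]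
    field_simp
    ring
  · rw [Uminus, if_neg hxp.not_ge, if_pos hxp]
    field_simp
    ring

theorem Uminus_mapsTo_Icc {a p : ℝ} (ha : 0 < a) (hpl : 1 - 1 / a ≤ p) (hpu : p ≤ 1 / a) :
    Set.MapsTo (Uminus a p) (Set.Icc 0 1) (Set.Icc 0 1) := by
  rintro x ⟨hx0, hx1⟩
  have hap : a * p ≤ 1 := by rwa [le_div_iff₀' ha] at hpu
  have hap' : a - 1 ≤ a * p := by
    have := mul_le_mul_of_nonneg_left hpl ha.le
    rwa [mul_sub, mul_one, mul_one_div_cancel ha.ne'] at this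
  unfold Uminus
  split_ifs <;> constructor <;> nlinarith

theorem codingMap_muMinus (a p : ℝ) (h : Admissible a p) :
    ∀ x ∈ Set.Icc (0 : ℝ) 1, codingMap a (muMinus a p x) = x := by
  obtain ⟨ha, -, -, -, hpl, hpu⟩ := h
  intro x hx
  have horbit (n : ℕ) : |(Uminus a p)^[n] x| ≤ 1 := by
    obtain ⟨h0, h1⟩ := (Uminus_mapsTo_Icc (by linarith) hpl hpu).iterate n hx
    exact abs_le.2 ⟨by linarith, h1⟩
  have hsum := hasSum_digit_div_pow_of_eq_digit_add_div (by rwa [abs_of_pos (by linarith)])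
    (Uminus_eq_digit_add_div (a := a) (p := p) (by linarith)) horbit
  rw [codingMap, ← tsum_mul_left]
  exact HasSum.tsum_eq (by simpa only [muMinus, decide_eq_true_eq, mul_div_assoc] using hsum)
end

section
/- For an admissible pair (a,p), the upper itinerary map x ↦ μ^+_{a,p}(x) is strictly increasing from [0,1] to {0,1}^ℕ with the lexicographic order: x < y implies μ^+_{a,p}(x) ≺ μ^+_{a,p}(y). -/
open scoped Classical

/-- The (strict) lexicographic order on `{0,1}^ℕ`: at the first differing index,
`ω` has a `0` and `σ` has a `1`. -/
def LexLt (ω σ : ℕ → Bool) : Prop :=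
  ∃ n : ℕ, (∀ m < n, ω m = σ m) ∧ ω n = false ∧ σ n = true

/-!
Both branches of `U⁺_{a,p}` have slope `a`, so as long as the itineraries of `x < y` agree, the
gap between their orbits is multiplied by `a` at each step: after `n` steps it is `aⁿ (y - x)`.
The orbits stay in `[0, 1]` while `aⁿ (y - x) → ∞`, so the itineraries must differ somewhere; at
the first such index the orbit of `x` is still below that of `y`, hence on the left of `p`
while the orbit of `y` is on the right.
-/

open Set

lemma Uplus_mapsTo_Icc {a p : ℝ} (ha : 0 < a) (hp : 1 - 1 / a ≤ p) (hp' : p ≤ 1 / a) :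
    MapsTo (Uplus a p) (Icc 0 1) (Icc 0 1) := by
  rintro x ⟨hx0, hx1⟩
  have hap : a * p ≤ 1 := by rwa [le_div_iff₀' ha] at hp'
  have hap' : a - 1 ≤ a * p := by
    have := mul_le_mul_of_nonneg_left hp ha.le
    rwa [mul_sub, mul_one_div_cancel ha.ne', mul_one] at this
  unfold Uplus
  split_ifs with hxp
  · exact ⟨by positivity, by nlinarith⟩
  · exact ⟨by nlinarith, by nlinarith⟩

lemma Uplus_sub_Uplus_of_iff {a p x y : ℝ} (hxy : p ≤ x ↔ p ≤ y) :
    Uplus a p y - Uplus a p x = a * (y - x) := by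
  by_cases hx : p ≤ x
  · simp only [Uplus, not_lt.mpr hx, not_lt.mpr (hxy.mp hx), if_false]
    ring
  · have hy : y < p := not_le.mp (mt hxy.mpr hx)
    simp only [Uplus, not_le.mp hx, hy, if_true]
    ring

lemma iterate_Uplus_sub_of_muPlus_eq {a p x y : ℝ} {n : ℕ}
    (hagree : ∀ m < n, muPlus a p x m = muPlus a p y m) :
    (Uplus a p)^[n] y - (Uplus a p)^[n] x = a ^ n * (y - x) := by
  induction n with
  | zero => simp
  | succ n ih =>
    have hn : p ≤ (Uplus a p)^[n] x ↔ p ≤ (Uplus a p)^[n] y := by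
      simpa [muPlus] using hagree n n.lt_succ_self
    rw [Function.iterate_succ_apply', Function.iterate_succ_apply', Uplus_sub_Uplus_of_iff hn,
      ih fun m hm => hagree m (hm.trans n.lt_succ_self), pow_succ]
    ring

lemma exists_muPlus_ne {a p x y : ℝ} (h : Admissible a p) (hx : x ∈ Icc (0 : ℝ) 1)
    (hy : y ∈ Icc (0 : ℝ) 1) (hxy : x < y) : ∃ n, muPlus a p x n ≠ muPlus a p y n := by
  obtain ⟨ha, -, -, -, hp, hp'⟩ := h
  by_contra! hall
  obtain ⟨n, hn⟩ := pow_unbounded_of_one_lt (1 / (y - x)) ha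
  have hgap := iterate_Uplus_sub_of_muPlus_eq (n := n) fun m _ => hall m
  have hmaps := (Uplus_mapsTo_Icc (by linarith) hp hp').iterate n
  have hxn := hmaps hx
  have hyn := hmaps hy
  rw [div_lt_iff₀ (sub_pos.mpr hxy)] at hn
  linarith [hxn.1, hyn.2]

lemma decide_le_eq_false_and_decide_le_eq_true {p s t : ℝ} (hst : s < t)
    (hne : decide (p ≤ s) ≠ decide (p ≤ t)) : decide (p ≤ s) = false ∧ decide (p ≤ t) = true := by
  by_cases hs : p ≤ s
  · simp [hs, hs.trans hst.le] at hne
  · by_cases ht : p ≤ t <;> simp_all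

theorem muPlus_strictMono (a p : ℝ) (h : Admissible a p) :
    ∀ x ∈ Set.Icc (0 : ℝ) 1, ∀ y ∈ Set.Icc (0 : ℝ) 1,
      x < y → LexLt (muPlus a p x) (muPlus a p y) := by
  intro x hx y hy hxy
  have hne := exists_muPlus_ne h hx hy hxy
  have hagree : ∀ m < Nat.find hne, muPlus a p x m = muPlus a p y m :=
    fun m hm => not_not.mp (Nat.find_min hne hm)
  have hlt : (Uplus a p)^[Nat.find hne] x < (Uplus a p)^[Nat.find hne] y := by
    rw [← sub_pos, iterate_Uplus_sub_of_muPlus_eq hagree]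
    exact mul_pos (pow_pos (by linarith [h.1]) _) (sub_pos.mpr hxy)
  exact ⟨Nat.find hne, hagree, decide_le_eq_false_and_decide_le_eq_true hlt (Nat.find_spec hne)⟩
end

section
/- For an admissible pair (a,p), the lower itinerary map x ↦ μ^-_{a,p}(x) is strictly increasing on [0,1] with respect to the lexicographic order on {0,1}^ℕ. -/
/-!
While the itineraries of `x < y` agree up to time `n`, the two orbits always lie on the same
branch of `U⁻_{a,p}`, which is affine of slope `a` on each branch, so the `n`-th iterates are
`a ^ n * (y - x)` apart. Admissibility makes `[0,1]` invariant, so this gap is at most `1`; as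
`a > 1` the itineraries must therefore differ, and at the first difference the iterate of `y`
is the larger one, hence lies to the right of `p`.
-/

open scoped Classical

open Set

section Uminus

variable {a p : ℝ}

theorem Uminus_mapsTo_Icc_s11 (h : Admissible a p) :
    MapsTo (Uminus a p) (Icc 0 1) (Icc 0 1) := by
  obtain ⟨ha1, -, -, -, hpl, hpu⟩ := h
  have ha0 : 0 < a := by linarith
  have hap_le : a * p ≤ 1 := by
    calc a * p ≤ a * (1 / a) := by gcongr
      _ = 1 := by field_simp
  have hap_ge : a - 1 ≤ a * p := by
    calc a - 1 = a * (1 - 1 / a) := by field_simp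
      _ ≤ a * p := by gcongr
  rintro x ⟨hx0, hx1⟩
  unfold Uminus
  split_ifs with hxp
  · exact ⟨by positivity, by nlinarith⟩
  · exact ⟨by nlinarith, by nlinarith⟩

theorem Uminus_sub_Uminus {u v : ℝ} (huv : p < u ↔ p < v) :
    Uminus a p v - Uminus a p u = a * (v - u) := by
  unfold Uminus
  by_cases hu : u ≤ p
  · rw [if_pos hu, if_pos (not_lt.mp fun hv => not_lt.mpr hu (huv.mpr hv))]
    ring
  · rw [if_neg hu, if_neg fun hv => hu (not_lt.mp fun hu' => not_lt.mpr hv (huv.mp hu'))]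
    ring

theorem iterate_sub_iterate_of_muMinus_eq {x y : ℝ} {n : ℕ}
    (hxy : ∀ m < n, muMinus a p x m = muMinus a p y m) :
    (Uminus a p)^[n] y - (Uminus a p)^[n] x = a ^ n * (y - x) := by
  induction n with
  | zero => simp
  | succ n ih =>
    have hn : p < (Uminus a p)^[n] x ↔ p < (Uminus a p)^[n] y :=
      decide_eq_decide.mp (hxy n n.lt_succ_self)
    rw [Function.iterate_succ_apply', Function.iterate_succ_apply', Uminus_sub_Uminus hn,
      ih fun m hm => hxy m (Nat.lt_succ_of_lt hm), pow_succ]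
    ring

theorem muMinus_eq_false_and_eq_true {x y : ℝ} {n : ℕ}
    (hlt : (Uminus a p)^[n] x < (Uminus a p)^[n] y) (hne : muMinus a p x n ≠ muMinus a p y n) :
    muMinus a p x n = false ∧ muMinus a p y n = true := by
  simp only [muMinus, ne_eq, decide_eq_decide, decide_eq_false_iff_not, decide_eq_true_eq] at hne ⊢
  by_cases hpx : p < (Uminus a p)^[n] x
  · exact absurd ⟨fun _ => hpx.trans hlt, fun _ => hpx⟩ hne
  · exact ⟨hpx, by_contra fun hpy => hne ⟨fun hpx' => absurd hpx' hpx, fun hpy' => absurd hpy' hpy⟩⟩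

theorem exists_muMinus_ne (h : Admissible a p) {x y : ℝ} (hx : x ∈ Icc 0 1)
    (hy : y ∈ Icc 0 1) (hxy : x < y) : ∃ k, muMinus a p x k ≠ muMinus a p y k := by
  by_contra! hsame
  have hgap : 0 < y - x := sub_pos.mpr hxy
  obtain ⟨k, hk⟩ := pow_unbounded_of_one_lt (1 / (y - x)) h.1
  have hdiff := iterate_sub_iterate_of_muMinus_eq (n := k) fun m _ => hsame m
  have hxk := (Uminus_mapsTo_Icc_s11 h).iterate k hx
  have hyk := (Uminus_mapsTo_Icc_s11 h).iterate k hy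
  have hbig : 1 < a ^ k * (y - x) := (div_lt_iff₀ hgap).mp hk
  linarith [hxk.1, hyk.2]

end Uminus

theorem muMinus_strictMono (a p : ℝ) (h : Admissible a p) :
    ∀ x ∈ Set.Icc (0 : ℝ) 1, ∀ y ∈ Set.Icc (0 : ℝ) 1,
      x < y → LexLt (muMinus a p x) (muMinus a p y) := by
  intro x hx y hy hxy
  have hne := exists_muMinus_ne h hx hy hxy
  have hfirst := Nat.find_spec hne
  set n := Nat.find hne
  have hagree : ∀ m < n, muMinus a p x m = muMinus a p y m := fun m hm =>
    not_ne_iff.mp (Nat.find_min hne hm)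
  have hlt : (Uminus a p)^[n] x < (Uminus a p)^[n] y := by
    have := iterate_sub_iterate_of_muMinus_eq hagree
    have : 0 < a ^ n * (y - x) := mul_pos (pow_pos (by linarith [h.1]) n) (sub_pos.mpr hxy)
    linarith
  exact ⟨n, hagree, muMinus_eq_false_and_eq_true hlt hfirst⟩
end

section
/- For an admissible pair (a,p), the restriction of the coding map π_a to the upper address space Ω^+_{a,p} is strictly increasing: if ω, σ ∈ Ω^+_{a,p} and ω ≺ σ lexicographically, then π_a(ω) < π_a(σ). -/
open scoped Classical

/-! On `[0,1]` the coding map inverts the itinerary map: since `U⁺ x = a x - (a - 1) ω₀`,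
the partial sums of `π_a (μ⁺ x)` telescope to `x - (U⁺)ⁿ x / aⁿ`, and the orbit stays in
`[0,1]`.
So it suffices that `μ⁺` reflects the lexicographic order. If `y ≤ x` and their itineraries
agree before `n`, the iterates never sat on different sides of `p`, where `U⁺` is increasing,
so `(U⁺)ⁿ y ≤ (U⁺)ⁿ x`; hence `x` cannot have digit `0` at `n` where `y` has digit `1`. -/

open Set

lemma Uplus_eq_sub_indicator (a p x : ℝ) :
    Uplus a p x = a * x - (a - 1) * (if p ≤ x then (1 : ℝ) else 0) := by
  unfold Uplus
  split_ifs <;> linarith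

section UpperLorenzMap

variable {a p : ℝ}

lemma mapsTo_Uplus_Icc (ha : 0 < a) (hpl : 1 - 1 / a ≤ p) (hpu : p ≤ 1 / a) :
    MapsTo (Uplus a p) (Icc 0 1) (Icc 0 1) := by
  rintro x ⟨hx0, hx1⟩
  have hap : a * p ≤ 1 := by rwa [le_div_iff₀' ha] at hpu
  have hap' : a - 1 ≤ a * p := by
    have := mul_le_mul_of_nonneg_left hpl ha.le
    rwa [mul_sub, mul_one, mul_one_div_cancel ha.ne'] at this
  unfold Uplus
  split_ifs with hxp
  · exact ⟨by positivity, by nlinarith⟩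
  · constructor <;> nlinarith

lemma Uplus_le_Uplus_of_same_side (ha : 0 ≤ a) {x y : ℝ} (hxy : x ≤ y)
    (hside : p ≤ x ↔ p ≤ y) : Uplus a p x ≤ Uplus a p y := by
  rw [Uplus_eq_sub_indicator, Uplus_eq_sub_indicator, if_congr hside rfl rfl]
  gcongr

lemma iterate_Uplus_le_of_muPlus_eq (ha : 0 ≤ a) {x y : ℝ} (hxy : x ≤ y) (n : ℕ)
    (hagree : ∀ m < n, muPlus a p x m = muPlus a p y m) :
    (Uplus a p)^[n] x ≤ (Uplus a p)^[n] y := by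
  induction n with
  | zero => exact hxy
  | succ n ih =>
    rw [Function.iterate_succ_apply', Function.iterate_succ_apply']
    exact Uplus_le_Uplus_of_same_side ha (ih fun m hm => hagree m (by omega))
      (decide_eq_decide.mp (hagree n n.lt_succ_self))

lemma lt_of_lexLt_muPlus (ha : 0 ≤ a) {x y : ℝ} (hlex : LexLt (muPlus a p x) (muPlus a p y)) :
    x < y := by
  obtain ⟨n, hagree, hx, hy⟩ := hlex
  by_contra! hyx
  have hle := iterate_Uplus_le_of_muPlus_eq ha hyx n fun m hm => (hagree m hm).symm
  simp only [muPlus, decide_eq_false_iff_not, decide_eq_true_iff] at hx hy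
  exact hx (hy.trans hle)

lemma sum_range_codingMap_muPlus (ha : a ≠ 0) (x : ℝ) (n : ℕ) :
    ∑ k ∈ Finset.range n, (1 - 1 / a) * ((if muPlus a p x k then (1 : ℝ) else 0) / a ^ k)
      = x - (Uplus a p)^[n] x / a ^ n := by
  induction n with
  | zero => simp
  | succ n ih =>
    rw [Finset.sum_range_succ, ih, Function.iterate_succ_apply',
      Uplus_eq_sub_indicator _ _ ((Uplus a p)^[n] x)]
    simp only [muPlus, decide_eq_true_eq]
    field_simp
    ring

lemma codingMap_muPlus_s12 (ha : 1 < a) (hmaps : MapsTo (Uplus a p) (Icc 0 1) (Icc 0 1))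
    {x : ℝ} (hx : x ∈ Icc (0 : ℝ) 1) : codingMap a (muPlus a p x) = x := by
  have ha0 : 0 < a := one_pos.trans ha
  have horbit (n : ℕ) : (Uplus a p)^[n] x ∈ Icc (0 : ℝ) 1 := hmaps.iterate n hx
  have hremainder : Filter.Tendsto (fun n => (Uplus a p)^[n] x / a ^ n) Filter.atTop (nhds 0) := by
    refine squeeze_zero (fun n => div_nonneg (horbit n).1 (by positivity))
      (g := fun n => (1 / a) ^ n) (fun n => ?_)
      (tendsto_pow_atTop_nhds_zero_of_lt_one (by positivity) ((div_lt_one ha0).2 ha))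
    rw [div_pow, one_pow]
    gcongr
    exact (horbit n).2
  have hsum : HasSum
      (fun k => (1 - 1 / a) * ((if muPlus a p x k then (1 : ℝ) else 0) / a ^ k)) x := by
    refine (hasSum_iff_tendsto_nat_of_nonneg (fun k => ?_) x).2 ?_
    · have : 0 ≤ 1 - 1 / a := by rw [sub_nonneg, div_le_one ha0]; exact ha.le
      split_ifs <;> positivity
    · simp_rw [sum_range_codingMap_muPlus ha0.ne']
      simpa using tendsto_const_nhds.sub hremainder
  rw [codingMap, ← tsum_mul_left, hsum.tsum_eq]

end UpperLorenzMap

theorem codingMap_strictMono_on_upper_address_space (a p : ℝ) (h : Admissible a p) :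
    ∀ ω ∈ muPlus a p '' Set.Icc (0 : ℝ) 1, ∀ σ ∈ muPlus a p '' Set.Icc (0 : ℝ) 1,
      LexLt ω σ → codingMap a ω < codingMap a σ := by
  obtain ⟨ha, -, -, -, hpl, hpu⟩ := h
  have hmaps := mapsTo_Uplus_Icc (one_pos.trans ha) hpl hpu
  rintro ω ⟨x, hx, rfl⟩ σ ⟨y, hy, rfl⟩ hlex
  rw [codingMap_muPlus_s12 ha hmaps hx, codingMap_muPlus_s12 ha hmaps hy]
  exact lt_of_lexLt_muPlus (zero_le_one.trans ha.le) hlex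
end

section
/- For an admissible pair (a,p), the restriction of the coding map π_a to Ω^+_{a,p} ∪ Ω^-_{a,p} is monotone increasing: if ω, σ ∈ Ω^+_{a,p} ∪ Ω^-_{a,p} with ω ⪯ σ lexicographically, then π_a(ω) ≤ π_a(σ). -/
open scoped Classical

/-
An itinerary records which branch `z ↦ a z` or `z ↦ a z + 1 - a` of the Lorenz map is applied
along the orbit of `x`. Unwinding the branches gives
`x = (1 - 1/a) ∑_{k<n} ω_k a^{-k} + U^n(x) a^{-n}`, and since orbits stay in `[0,1]` the remainder
vanishes, so `π_a` inverts both itinerary maps. Both branches are increasing with the same slope, so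
the order of two points persists along their orbits for as long as their itineraries agree; at the
first disagreement the point coded `0` lies left of `p` and the one coded `1` right of it, which
is impossible if the order had been reversed from the start.
-/

open Set Filter Topology

/-- `U` is a uniform Lorenz map of slope `a` and critical point `p`, applying its right branch
exactly where `b` is `true`. -/
structure IsLorenzCoding (a p : ℝ) (U : ℝ → ℝ) (b : ℝ → Bool) : Prop where
  map_eq : ∀ z, U z = a * z + (if b z then 1 - a else 0)
  le_of_eq_false : ∀ z, b z = false → z ≤ p
  le_of_eq_true : ∀ z, b z = true → p ≤ z

def itinerary (U : ℝ → ℝ) (b : ℝ → Bool) (x : ℝ) : ℕ → Bool :=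
  fun k => b (U^[k] x)

section LorenzCoding

variable {a p : ℝ} {U V : ℝ → ℝ} {b c : ℝ → Bool}

theorem isLorenzCoding_Uplus : IsLorenzCoding a p (Uplus a p) (fun z => decide (p ≤ z)) where
  map_eq z := by
    by_cases hz : p ≤ z
    · simp [Uplus, hz, not_lt.mpr hz]; ring
    · simp [Uplus, hz, lt_of_not_ge hz]
  le_of_eq_false z hz := (not_le.mp (of_decide_eq_false hz)).le
  le_of_eq_true z hz := of_decide_eq_true hz

theorem isLorenzCoding_Uminus : IsLorenzCoding a p (Uminus a p) (fun z => decide (p < z)) where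
  map_eq z := by
    by_cases hz : p < z
    · simp [Uminus, hz, not_le.mpr hz]; ring
    · simp [Uminus, hz, not_lt.mp hz]
  le_of_eq_false z hz := not_lt.mp (of_decide_eq_false hz)
  le_of_eq_true z hz := (of_decide_eq_true hz).le

theorem IsLorenzCoding.map_lt_map (hU : IsLorenzCoding a p U b) (hV : IsLorenzCoding a p V c)
    (ha : 0 < a) {x y : ℝ} (hxy : x < y) (hbc : b x = c y) : U x < V y := by
  rw [hU.map_eq, hV.map_eq, hbc]
  linarith [mul_lt_mul_of_pos_left hxy ha]

theorem IsLorenzCoding.le_of_lexLt (hU : IsLorenzCoding a p U b) (hV : IsLorenzCoding a p V c)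
    (ha : 0 < a) {x y : ℝ} (hlex : LexLt (itinerary U b x) (itinerary V c y)) : x ≤ y := by
  obtain ⟨n, hpre, hb, hc⟩ := hlex
  by_contra! hyx
  have horbit : ∀ k ≤ n, V^[k] y < U^[k] x := by
    intro k hk
    induction k with
    | zero => exact hyx
    | succ k ih =>
      simp only [Function.iterate_succ_apply']
      exact hV.map_lt_map hU ha (ih (by omega)) (hpre k (by omega)).symm
  linarith [horbit n le_rfl, hU.le_of_eq_false _ hb, hV.le_of_eq_true _ hc]

theorem IsLorenzCoding.mapsTo_Icc (hU : IsLorenzCoding a p U b) (ha : 0 < a)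
    (hp₁ : 1 - 1 / a ≤ p) (hp₂ : p ≤ 1 / a) : MapsTo U (Icc 0 1) (Icc 0 1) := by
  have hap₁ : a - 1 ≤ a * p := by
    have := mul_le_mul_of_nonneg_left hp₁ ha.le
    rwa [mul_sub, mul_one, mul_one_div_cancel ha.ne'] at this
  have hap₂ : a * p ≤ 1 := by
    have := mul_le_mul_of_nonneg_left hp₂ ha.le
    rwa [mul_one_div_cancel ha.ne'] at this
  rintro z ⟨hz₀, hz₁⟩
  rw [hU.map_eq]
  cases hbz : b z
  · have hzp := hU.le_of_eq_false z hbz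
    simp only [Bool.false_eq_true, if_false, add_zero]
    constructor <;> nlinarith
  · have hpz := hU.le_of_eq_true z hbz
    simp only [if_true]
    constructor <;> nlinarith

theorem IsLorenzCoding.sum_add_iterate_div_pow (hU : IsLorenzCoding a p U b) (ha : a ≠ 0)
    (x : ℝ) (n : ℕ) :
    (1 - 1 / a) * ∑ k ∈ Finset.range n, (if itinerary U b x k then (1 : ℝ) else 0) / a ^ k
      + U^[n] x / a ^ n = x := by
  induction n with
  | zero => simp
  | succ n ih =>
    have hstep : (1 - 1 / a) * ((if itinerary U b x n then 1 else 0) / a ^ n)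
        + U (U^[n] x) / a ^ (n + 1) = U^[n] x / a ^ n := by
      rw [hU.map_eq, itinerary]
      split_ifs <;> field_simp <;> ring
    rw [Finset.sum_range_succ, Function.iterate_succ_apply']
    linear_combination ih + hstep

theorem summable_coding_terms (ω : ℕ → Bool) (ha : 1 < a) :
    Summable fun k => (if ω k then (1 : ℝ) else 0) / a ^ k := by
  refine Summable.of_nonneg_of_le (fun k => by positivity) (fun k => ?_)
    (summable_geometric_of_lt_one (by positivity) ((div_lt_one (by positivity)).mpr ha))
  rw [div_pow, one_pow]
  gcongr
  split_ifs <;> norm_num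

theorem IsLorenzCoding.codingMap_itinerary (hU : IsLorenzCoding a p U b) (ha : 1 < a)
    (hp₁ : 1 - 1 / a ≤ p) (hp₂ : p ≤ 1 / a) {x : ℝ} (hx : x ∈ Icc (0 : ℝ) 1) :
    codingMap a (itinerary U b x) = x := by
  have ha₀ : 0 < a := by linarith
  have hinv : 1 / a < 1 := (div_lt_one ha₀).mpr ha
  have hremainder : Tendsto (fun n => U^[n] x / a ^ n) atTop (𝓝 0) := by
    refine squeeze_zero (fun n => ?_) (fun n => ?_)
      (tendsto_pow_atTop_nhds_zero_of_lt_one (by positivity) hinv)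
    all_goals have horbit := (hU.mapsTo_Icc ha₀ hp₁ hp₂).iterate n hx
    · exact div_nonneg horbit.1 (by positivity)
    · rw [div_pow, one_pow]
      gcongr
      exact horbit.2
  have hpartial := ((summable_coding_terms (itinerary U b x) ha).hasSum.tendsto_sum_nat.const_mul
    (1 - 1 / a)).add hremainder
  simp only [hU.sum_add_iterate_div_pow ha₀.ne', add_zero] at hpartial
  exact tendsto_nhds_unique tendsto_const_nhds hpartial |>.symm

end LorenzCoding

theorem codingMap_mono_on_union_of_address_spaces (a p : ℝ) (h : Admissible a p) :
    ∀ ω ∈ muPlus a p '' Set.Icc (0 : ℝ) 1 ∪ muMinus a p '' Set.Icc (0 : ℝ) 1,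
    ∀ σ ∈ muPlus a p '' Set.Icc (0 : ℝ) 1 ∪ muMinus a p '' Set.Icc (0 : ℝ) 1,
      (LexLt ω σ ∨ ω = σ) → codingMap a ω ≤ codingMap a σ := by
  obtain ⟨ha, -, -, -, hp₁, hp₂⟩ := h
  have hcoding : ∀ τ ∈ muPlus a p '' Icc (0 : ℝ) 1 ∪ muMinus a p '' Icc (0 : ℝ) 1,
      ∃ U b, IsLorenzCoding a p U b ∧ ∃ x ∈ Icc (0 : ℝ) 1, τ = itinerary U b x := by
    rintro τ (⟨x, hx, rfl⟩ | ⟨x, hx, rfl⟩)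
    exacts [⟨_, _, isLorenzCoding_Uplus, x, hx, rfl⟩, ⟨_, _, isLorenzCoding_Uminus, x, hx, rfl⟩]
  rintro ω hω σ hσ (hlex | rfl)
  · obtain ⟨U, b, hU, x, hx, rfl⟩ := hcoding ω hω
    obtain ⟨V, c, hV, y, hy, rfl⟩ := hcoding σ hσ
    rw [hU.codingMap_itinerary ha hp₁ hp₂ hx, hV.codingMap_itinerary ha hp₁ hp₂ hy]
    exact hU.le_of_lexLt hV (by linarith) hlex
  · rfl
end

section
/- For an admissible pair (a,p), every x ∈ (0,1) satisfies μ^-_{a,p}(x) ⪯ μ^+_{a,p}(x) in the lexicographic order, with equality if and only if (U^+_{a,p})^k(x) ≠ p for all k ≥ 0. -/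
open scoped Classical

/-!
`U⁺` and `U⁻` differ only at the critical point `p`, so the two orbits of `x` agree until the
first time `n` they reach `p`, and so do the itineraries before time `n`. At time `n` the orbit
sits at `p`, which `μ⁺` records as `1` and `μ⁻` as `0`; hence `μ⁻(x) < μ⁺(x)` if the orbit ever
hits `p`, and `μ⁻(x) = μ⁺(x)` otherwise.
-/

theorem LexLt.ne {ω σ : ℕ → Bool} (h : LexLt ω σ) : ω ≠ σ := by
  obtain ⟨n, -, hω, hσ⟩ := h
  intro heq
  simp [heq, hσ] at hω

section Itineraries

variable {a p x : ℝ}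

theorem Uminus_eq_Uplus_of_ne {y : ℝ} (hy : y ≠ p) : Uminus a p y = Uplus a p y := by
  rcases hy.lt_or_gt with hlt | hgt
  · simp [Uminus, Uplus, hlt, hlt.le]
  · simp [Uminus, Uplus, hgt.not_ge, hgt.not_gt]

theorem iterate_Uminus_eq_iterate_Uplus {n : ℕ} (hne : ∀ m < n, (Uplus a p)^[m] x ≠ p) :
    (Uminus a p)^[n] x = (Uplus a p)^[n] x := by
  induction n with
  | zero => rfl
  | succ n ih =>
    have hprev : (Uminus a p)^[n] x = (Uplus a p)^[n] x :=
      ih fun m hm => hne m (hm.trans n.lt_succ_self)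
    rw [Function.iterate_succ_apply', Function.iterate_succ_apply', hprev,
      Uminus_eq_Uplus_of_ne (hne n n.lt_succ_self)]

theorem muMinus_apply_eq_muPlus_apply {n : ℕ} (hne : ∀ m ≤ n, (Uplus a p)^[m] x ≠ p) :
    muMinus a p x n = muPlus a p x n := by
  have horbit := iterate_Uminus_eq_iterate_Uplus fun m hm => hne m hm.le
  simp only [muMinus, muPlus, horbit, (hne n le_rfl).symm.le_iff_lt]

theorem muMinus_eq_muPlus_of_forall_ne (hne : ∀ k, (Uplus a p)^[k] x ≠ p) :
    muMinus a p x = muPlus a p x :=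
  funext fun _ => muMinus_apply_eq_muPlus_apply fun m _ => hne m

theorem lexLt_muMinus_muPlus_of_first_hit {n : ℕ} (hhit : (Uplus a p)^[n] x = p)
    (hne : ∀ m < n, (Uplus a p)^[m] x ≠ p) : LexLt (muMinus a p x) (muPlus a p x) := by
  refine ⟨n, fun m hm => muMinus_apply_eq_muPlus_apply fun k hk => hne k (hk.trans_lt hm),
    ?_, ?_⟩
  · simp [muMinus, iterate_Uminus_eq_iterate_Uplus hne, hhit]
  · simp [muPlus, hhit]

theorem lexLt_muMinus_muPlus_of_exists_eq (hhit : ∃ k, (Uplus a p)^[k] x = p) :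
    LexLt (muMinus a p x) (muPlus a p x) :=
  lexLt_muMinus_muPlus_of_first_hit (Nat.find_spec hhit) fun _ => Nat.find_min hhit

end Itineraries

theorem muMinus_le_muPlus_general (a p : ℝ) :
    ∀ x ∈ Set.Ioo (0 : ℝ) 1,
      (LexLt (muMinus a p x) (muPlus a p x) ∨ muMinus a p x = muPlus a p x) ∧
      (muMinus a p x = muPlus a p x ↔ ∀ k : ℕ, (Uplus a p)^[k] x ≠ p) := by
  intro x _
  by_cases hne : ∀ k : ℕ, (Uplus a p)^[k] x ≠ p
  · have heq := muMinus_eq_muPlus_of_forall_ne hne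
    exact ⟨Or.inr heq, iff_of_true heq hne⟩
  · have hlt := lexLt_muMinus_muPlus_of_exists_eq (not_forall_not.mp hne)
    exact ⟨Or.inl hlt, iff_of_false hlt.ne hne⟩

theorem muMinus_le_muPlus (a p : ℝ) (h : Admissible a p) :
    ∀ x ∈ Set.Ioo (0 : ℝ) 1,
      (LexLt (muMinus a p x) (muPlus a p x) ∨ muMinus a p x = muPlus a p x) ∧
      (muMinus a p x = muPlus a p x ↔ ∀ k : ℕ, (Uplus a p)^[k] x ≠ p) :=
  muMinus_le_muPlus_general a p
end

section
/- Fix a ∈ (1,2). The map p ↦ μ^+_{a,p}(p), from the set of p with (a,p) admissible to {0,1}^ℕ with lexicographic order, is (weakly) increasing: if 1 - 1/a ≤ p < p' ≤ 1/a, then μ^+_{a,p}(p) ⪯ μ^+_{a,p'}(p'). -/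
open scoped Classical

/-!
While the upper itineraries of `p` under `U⁺_{a,p}` and of `p'` under `U⁺_{a,p'}` agree, both
orbits apply the same affine branch at every step, so their distance is multiplied by `a ≥ 1`.
At the first disagreement the orbit of `p'` therefore lies at least `p' - p` above that of `p`,
so it cannot fall below `p'` while the other orbit is at or above `p`.
-/

theorem lexLt_or_eq_of_forall_agree_imp {ω σ : ℕ → Bool}
    (h : ∀ n, (∀ m < n, ω m = σ m) → ω n = true → σ n = true) :
    LexLt ω σ ∨ ω = σ := by
  by_cases heq : ω = σ
  · exact Or.inr heq
  have hex : ∃ n, ω n ≠ σ n := Function.ne_iff.mp heq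
  have hmin : ∀ m < Nat.find hex, ω m = σ m := fun m hm => not_not.mp (Nat.find_min hex hm)
  refine Or.inl ⟨Nat.find hex, hmin, ?_⟩
  have hne := Nat.find_spec hex
  have himp := h _ hmin
  cases hω : ω (Nat.find hex) <;> cases hσ : σ (Nat.find hex) <;> simp_all

theorem Uplus_sub_Uplus {a p p' x x' : ℝ} (h : p ≤ x ↔ p' ≤ x') :
    Uplus a p' x' - Uplus a p x = a * (x' - x) := by
  unfold Uplus
  by_cases hx : p ≤ x
  · rw [if_neg (not_lt.2 hx), if_neg (not_lt.2 (h.mp hx))]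
    ring
  · rw [if_pos (not_le.1 hx), if_pos (not_le.1 (mt h.mpr hx))]
    ring

theorem iterate_Uplus_sub_iterate_Uplus {a p p' x x' : ℝ} {k : ℕ}
    (h : ∀ m < k, muPlus a p x m = muPlus a p' x' m) :
    (Uplus a p')^[k] x' - (Uplus a p)^[k] x = a ^ k * (x' - x) := by
  induction k with
  | zero => simp
  | succ n ih =>
    have hbranch := h n n.lt_succ_self
    simp only [muPlus, decide_eq_decide] at hbranch
    rw [Function.iterate_succ_apply', Function.iterate_succ_apply', Uplus_sub_Uplus hbranch,
      ih fun m hm => h m (hm.trans n.lt_succ_self)]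
    ring

theorem muPlus_kneading_mono_in_p_general (a : ℝ) (ha : a ∈ Set.Ioo (1 : ℝ) 2)
    (p p' : ℝ) (hpp' : p < p') :
    LexLt (muPlus a p p) (muPlus a p' p') ∨ muPlus a p p = muPlus a p' p' := by
  refine lexLt_or_eq_of_forall_agree_imp fun n hagree hω => ?_
  have hx : p ≤ (Uplus a p)^[n] p := by simpa [muPlus] using hω
  have hgap := iterate_Uplus_sub_iterate_Uplus hagree
  have hpow : 1 ≤ a ^ n := one_le_pow₀ ha.1.le
  have hy : p' ≤ (Uplus a p')^[n] p' := by nlinarith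
  simpa [muPlus] using hy

theorem muPlus_kneading_mono_in_p (a : ℝ) (ha : a ∈ Set.Ioo (1 : ℝ) 2)
    (p p' : ℝ) (hp : 1 - 1 / a ≤ p) (hpp' : p < p') (hp' : p' ≤ 1 / a) :
    LexLt (muPlus a p p) (muPlus a p' p') ∨ muPlus a p p = muPlus a p' p' :=
  muPlus_kneading_mono_in_p_general a ha p p' hpp'
end
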